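/- arXiv:2205.05413 — 4 statements merged into one kernel-verified Lean document; each statement's English description precedes it below -/
import Mathlib

section
/- Let λ > 0 be a real number. For any two distinct k1, k2 in F_2^4, the scaled E_8 lattice points λ·(k1 H) and λ·(k2 H) in ℝ^8 satisfy ‖λ·(k1 H) − λ·(k2 H)‖_{2λ,2} ≥ 2λ. In particular, the packing radius of the scalable E_8 lattice code with scale factor λ, measured in the 2λ-periodic ℓ2 metric, is at least λ. -/
/-- The centered representative `x mod± p ∈ [-p/2, p/2)`. -/
noncomputable def cmod (p x : ℝ) : ℝ := x - p * (⌊x / p + 1/2⌋ : ℤ)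

/-- The `p`-periodic ℓ₂ norm `‖w‖_{p,2}`. -/
noncomputable def pnorm (p : ℝ) {d : ℕ} (w : Fin d → ℝ) : ℝ :=
  Real.sqrt (∑ i, (cmod p (w i)) ^ 2)

/-- The generator matrix `H` of the Extended Hamming Code `H₈` over `F₂`. -/
def Hmat : Matrix (Fin 4) (Fin 8) (ZMod 2) :=
  !![1,1,1,1,0,0,0,0;
     0,0,1,1,1,1,0,0;
     0,0,0,0,1,1,1,1;
     0,1,0,1,0,1,0,1]

/-- The scaled `E₈` lattice point `λ·(kH) ∈ ℝ⁸` attached to `k ∈ F₂⁴`. -/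
noncomputable def encodeE8 (lam : ℝ) (k : Fin 4 → ZMod 2) : Fin 8 → ℝ :=
  fun i => lam * ((Matrix.vecMul k Hmat) i).val

/-- The extended Hamming code has minimum distance 4. -/
lemma hamming_min : ∀ k : Fin 4 → ZMod 2, k ≠ 0 →
    4 ≤ (Finset.univ.filter (fun i => Matrix.vecMul k Hmat i ≠ 0)).card := by
  decide

lemma cmod_lam (lam : ℝ) (hlam : 0 < lam) : cmod (2 * lam) lam = -lam := by
  unfold cmod
  have h : lam / (2 * lam) + 1/2 = 1 := by field_simp; ring
  rw [h]
  ring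

lemma cmod_neg_lam (lam : ℝ) (hlam : 0 < lam) : cmod (2 * lam) (-lam) = -lam := by
  unfold cmod
  have h : -lam / (2 * lam) + 1/2 = 0 := by field_simp; ring
  rw [h]
  ring

/-- For distinct `k₁, k₂ ∈ F₂⁴`, the scaled `E₈` lattice points `λ·(k₁H)` and `λ·(k₂H)`
are at distance at least `2λ` in the `2λ`-periodic ℓ₂ metric. -/
theorem scalable_E8_packing (lam : ℝ) (hlam : 0 < lam)
    (k₁ k₂ : Fin 4 → ZMod 2) (hk : k₁ ≠ k₂) :
    2 * lam ≤ pnorm (2 * lam) (encodeE8 lam k₁ - encodeE8 lam k₂) := by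
  set c := Matrix.vecMul k₁ Hmat with hc
  set d := Matrix.vecMul k₂ Hmat with hd
  set S := Finset.univ.filter (fun i => Matrix.vecMul (k₁ - k₂) Hmat i ≠ 0) with hS
  have hcard : 4 ≤ S.card := hamming_min _ (sub_ne_zero.2 hk)
  have hzo : ∀ a b : ZMod 2, a ≠ b → (a = 0 ∧ b = 1) ∨ (a = 1 ∧ b = 0) := by decide
  have hterm : ∀ i ∈ S, (cmod (2 * lam) ((encodeE8 lam k₁ - encodeE8 lam k₂) i)) ^ 2 = lam ^ 2 := by
    intro i hi
    have hne : c i ≠ d i := by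
      simp only [hS, Finset.mem_filter] at hi
      rw [Matrix.sub_vecMul] at hi
      exact sub_ne_zero.1 hi.2
    have hw : (encodeE8 lam k₁ - encodeE8 lam k₂) i = lam * (c i).val - lam * (d i).val := by
      simp [encodeE8, ← hc, ← hd]
    rcases hzo _ _ hne with ⟨h1, h2⟩ | ⟨h1, h2⟩
    · have hv : (encodeE8 lam k₁ - encodeE8 lam k₂) i = -lam := by
        rw [hw, h1, h2]; simp [ZMod.val_one]
      rw [hv, cmod_neg_lam lam hlam, neg_sq]
    · have hv : (encodeE8 lam k₁ - encodeE8 lam k₂) i = lam := by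
        rw [hw, h1, h2]; simp [ZMod.val_one]
      rw [hv, cmod_lam lam hlam, neg_sq]
  have hsum : (2 * lam) ^ 2 ≤ ∑ i, (cmod (2 * lam) ((encodeE8 lam k₁ - encodeE8 lam k₂) i)) ^ 2 := by
    calc (2 * lam) ^ 2 = 4 * lam ^ 2 := by ring
    _ ≤ S.card * lam ^ 2 := by
        apply mul_le_mul_of_nonneg_right _ (sq_nonneg lam)
        exact_mod_cast hcard
    _ = ∑ i ∈ S, (cmod (2 * lam) ((encodeE8 lam k₁ - encodeE8 lam k₂) i)) ^ 2 := by
        rw [Finset.sum_congr rfl hterm, Finset.sum_const, nsmul_eq_mul]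
    _ ≤ _ := Finset.sum_le_sum_of_subset_of_nonneg (Finset.subset_univ S)
        (fun i _ _ => sq_nonneg _)
  unfold pnorm
  calc 2 * lam = Real.sqrt ((2 * lam) ^ 2) := by
        rw [Real.sqrt_sq (by linarith)]
  _ ≤ _ := Real.sqrt_le_sqrt hsum
end

section
/- (Correctness bound of the scalable E_8 lattice decoding.) Let λ > 0 be a real number, let k1 in F_2^4, and set v1 = λ·(k1 H) in ℝ^8. If v2 in ℝ^8 satisfies ‖v2 − v1‖_{2λ,2} < λ, then for every k in F_2^4 with k ≠ k1 one has ‖v2 − λ·(kH)‖_{2λ,2} > ‖v2 − v1‖_{2λ,2}; hence k1 is the unique minimizer of k ↦ ‖v2 − λ·(kH)‖_{2λ,2} over F_2^4, i.e., the closest-point decoding of v2 in the scalable E_8 lattice code recovers k1. -/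
/-!
Put `e = v₂ − λ·(k₁H)` and `aᵢ = |eᵢ mod± 2λ|`. Where `kH` and `k₁H` differ, `v₂ − λ·(kH)` is `e`
shifted by `±λ`, half the period, which turns `aᵢ` into `λ − aᵢ`; elsewhere nothing changes.
Distinct codewords of the extended Hamming code differ on a set `S` of at least 4 coordinates, and
by Cauchy–Schwarz `∑_S aᵢ ≤ √|S| ‖e‖ < √|S| λ ≤ |S| λ / 2`, so
`∑_S (λ − aᵢ)² − ∑_S aᵢ² = |S| λ² − 2λ ∑_S aᵢ > 0`.
-/

lemma cmod_eq_mul_fract {p : ℝ} (hp : p ≠ 0) (x : ℝ) :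
    cmod p x = p * (Int.fract (x / p + 1 / 2) - 1 / 2) := by
  rw [cmod, Int.fract]
  field_simp
  ring

lemma cmod_sub_self (p x : ℝ) : cmod p (x - p) = cmod p x := by
  rcases eq_or_ne p 0 with rfl | hp
  · simp
  rw [cmod_eq_mul_fract hp, cmod_eq_mul_fract hp, sub_div, div_self hp, sub_add_eq_add_sub,
    Int.fract_sub_one]

lemma abs_fract_add_half_sub_half (t : ℝ) :
    |Int.fract (t + 1 / 2) - 1 / 2| = 1 / 2 - |Int.fract t - 1 / 2| := by
  have h0 := Int.fract_nonneg t
  have h1 := Int.fract_lt_one t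
  rcases lt_or_ge (Int.fract t) (1 / 2) with ht | ht
  · have hf : Int.fract (t + 1 / 2) = Int.fract t + 1 / 2 :=
      Int.fract_eq_iff.mpr ⟨by linarith, by linarith, ⌊t⌋, by rw [← Int.self_sub_fract]; ring⟩
    rw [hf, abs_of_nonneg (by linarith), abs_of_neg (by linarith)]
    ring
  · have hf : Int.fract (t + 1 / 2) = Int.fract t - 1 / 2 :=
      Int.fract_eq_iff.mpr ⟨by linarith, by linarith, ⌊t⌋ + 1, by
        push_cast; rw [← Int.self_sub_fract]; ring⟩
    rw [hf, abs_of_neg (by linarith), abs_of_nonneg (by linarith)]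
    ring

lemma abs_cmod_add_half {p : ℝ} (hp : 0 < p) (x : ℝ) :
    |cmod p (x + p / 2)| = p / 2 - |cmod p x| := by
  have h : (x + p / 2) / p + 1 / 2 = (x / p + 1 / 2) + 1 / 2 := by field_simp
  rw [cmod_eq_mul_fract hp.ne', cmod_eq_mul_fract hp.ne', h, abs_mul, abs_mul,
    abs_fract_add_half_sub_half, abs_of_pos hp]
  ring

lemma abs_cmod_sub_half {p : ℝ} (hp : 0 < p) (x : ℝ) :
    |cmod p (x - p / 2)| = p / 2 - |cmod p x| := by
  rw [show x - p / 2 = x + p / 2 - p by ring, cmod_sub_self, abs_cmod_add_half hp]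

lemma Finset.sum_sq_lt_sum_sub_sq_of_four_le_card {ι : Type*} {s : Finset ι} (hs : 4 ≤ s.card)
    {a : ι → ℝ} {c : ℝ} (ha : ∑ i ∈ s, a i ^ 2 < c ^ 2) :
    ∑ i ∈ s, a i ^ 2 < ∑ i ∈ s, (c - a i) ^ 2 := by
  have hcs : (c * ∑ i ∈ s, a i) ^ 2 < (s.card * c ^ 2 / 2) ^ 2 := by
    have hcard : (4 : ℝ) ≤ s.card := by exact_mod_cast hs
    have hcauchy := sq_sum_le_card_mul_sum_sq (s := s) (f := a)
    have hc : 0 < c ^ 2 := lt_of_le_of_lt (Finset.sum_nonneg fun i _ => sq_nonneg (a i)) ha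
    calc (c * ∑ i ∈ s, a i) ^ 2 ≤ c ^ 2 * (s.card * ∑ i ∈ s, a i ^ 2) := by
          rw [mul_pow]; gcongr
      _ < c ^ 2 * (s.card * c ^ 2) := by gcongr
      _ ≤ (s.card * c ^ 2 / 2) ^ 2 := by nlinarith
  have hlt : c * ∑ i ∈ s, a i < s.card * c ^ 2 / 2 :=
    abs_lt_of_sq_lt_sq' hcs (by positivity) |>.2
  have hexpand : ∑ i ∈ s, (c - a i) ^ 2 =
      s.card * c ^ 2 - 2 * (c * ∑ i ∈ s, a i) + ∑ i ∈ s, a i ^ 2 := by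
    simp only [sub_sq, Finset.sum_add_distrib, Finset.sum_sub_distrib, Finset.sum_const,
      nsmul_eq_mul, ← Finset.mul_sum]
    ring
  linarith

lemma four_le_card_vecMul_Hmat_ne_zero (k : Fin 4 → ZMod 2) (hk : k ≠ 0) :
    4 ≤ (Finset.univ.filter fun i => Matrix.vecMul k Hmat i ≠ 0).card := by
  revert k; decide

lemma ZMod.val_sub_val_eq_one_or_neg_one_of_ne {a b : ZMod 2} (h : a ≠ b) :
    (a.val : ℝ) - b.val = 1 ∨ (a.val : ℝ) - b.val = -1 := by
  fin_cases a <;> fin_cases b <;> first | exact absurd rfl h | norm_num [ZMod.val]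

lemma pnorm_lt_pnorm_of_shift_half {p : ℝ} (hp : 0 < p) {d : ℕ} {e f : Fin d → ℝ}
    (S : Finset (Fin d)) (hS : 4 ≤ S.card) (hout : ∀ i ∉ S, f i = e i)
    (hin : ∀ i ∈ S, f i = e i + p / 2 ∨ f i = e i - p / 2) (he : pnorm p e < p / 2) :
    pnorm p e < pnorm p f := by
  have hshift : ∀ i ∈ S, cmod p (f i) ^ 2 = (p / 2 - |cmod p (e i)|) ^ 2 := fun i hi => by
    rw [← sq_abs]
    rcases hin i hi with h | h <;> rw [h]
    exacts [by rw [abs_cmod_add_half hp], by rw [abs_cmod_sub_half hp]]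
  have hsum : ∑ i, cmod p (e i) ^ 2 < (p / 2) ^ 2 :=
    (Real.sqrt_lt' (by positivity)).mp he
  have hS_lt : ∑ i ∈ S, |cmod p (e i)| ^ 2 < (p / 2) ^ 2 := by
    simp only [sq_abs]
    exact (Finset.sum_le_sum_of_subset_of_nonneg (Finset.subset_univ S)
      fun i _ _ => sq_nonneg _).trans_lt hsum
  have hkey := Finset.sum_sq_lt_sum_sub_sq_of_four_le_card hS hS_lt
  simp only [sq_abs] at hkey
  have hfS : ∑ i ∈ S, cmod p (f i) ^ 2 = ∑ i ∈ S, (p / 2 - |cmod p (e i)|) ^ 2 :=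
    Finset.sum_congr rfl hshift
  have hfSc : ∑ i ∈ Sᶜ, cmod p (f i) ^ 2 = ∑ i ∈ Sᶜ, cmod p (e i) ^ 2 :=
    Finset.sum_congr rfl fun i hi => by rw [hout i (Finset.mem_compl.mp hi)]
  unfold pnorm
  apply Real.sqrt_lt_sqrt (Finset.sum_nonneg fun i _ => sq_nonneg _)
  rw [← Finset.sum_add_sum_compl S fun i => cmod p (e i) ^ 2,
    ← Finset.sum_add_sum_compl S fun i => cmod p (f i) ^ 2, hfS, hfSc]
  linarith

/-- Correctness bound of the scalable `E₈` lattice decoding: if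
`‖v₂ − λ·(k₁H)‖_{2λ,2} < λ`, then every other codeword `λ·(kH)` (`k ≠ k₁`) is strictly
farther from `v₂`, so closest-point decoding of `v₂` recovers `k₁` uniquely. -/
theorem scalable_E8_decoding_correctness (lam : ℝ) (hlam : 0 < lam)
    (k₁ : Fin 4 → ZMod 2) (v₂ : Fin 8 → ℝ)
    (h : pnorm (2 * lam) (v₂ - encodeE8 lam k₁) < lam) :
    ∀ k : Fin 4 → ZMod 2, k ≠ k₁ →
      pnorm (2 * lam) (v₂ - encodeE8 lam k₁) < pnorm (2 * lam) (v₂ - encodeE8 lam k) := by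
  intro k hk
  have hhalf : 2 * lam / 2 = lam := by ring
  refine pnorm_lt_pnorm_of_shift_half (by positivity)
    (Finset.univ.filter fun i => Matrix.vecMul (k₁ - k) Hmat i ≠ 0)
    (four_le_card_vecMul_Hmat_ne_zero _ (sub_ne_zero.mpr hk.symm)) (fun i hi => ?_)
    (fun i hi => ?_) (by rwa [hhalf])
  · simp only [Finset.mem_filter, Finset.mem_univ, true_and, not_not, Matrix.sub_vecMul,
      Pi.sub_apply, sub_eq_zero] at hi
    simp [encodeE8, hi]
  · simp only [Finset.mem_filter, Finset.mem_univ, true_and, Matrix.sub_vecMul,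
      Pi.sub_apply, ne_eq, sub_eq_zero] at hi
    simp only [Pi.sub_apply, encodeE8, hhalf]
    rcases ZMod.val_sub_val_eq_one_or_neg_one_of_ne hi with hv | hv
    · left; linear_combination lam * hv
    · right; linear_combination lam * hv
end

section
/- Let R be a commutative ring, n ≥ 2 an even integer, and f, g ∈ R[x] of degree < n. For every integer k with 0 ≤ k ≤ n/2 − 2, the k-th coefficient of the product of f and g in R[x]/(x^n − x^{n/2} + 1) is h_k = a_k − a_{k+n} − a_{k+3n/2}. -/
/-!
Write `n = 2m`. Modulo `p = X^(2m) - X^m + 1` one has `X^(2m) ≡ X^m - 1`, hence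
`X^(2m+j) ≡ X^(m+j) - X^j` and `X^(3m+j) ≡ -X^j` for `j < m`: every monomial of degree `< 4m`
reduces to a combination of monomials of degree `< 2m`. For `k < m` the `k`-th coefficient of
`X^d mod p` is therefore `[d = k] - [d = k + 2m] - [d = k + 3m]`, and since reduction modulo `p`
is linear, the theorem follows for `f * g`, whose degree is `< 4m`.
-/

open Polynomial

/-- `a_d = Σ_{i+j=d, 0 ≤ i,j ≤ n−1} f_i g_j`. -/
def convCoeff {R : Type*} [CommRing R] (n : ℕ) (f g : Polynomial R) (d : ℕ) : R :=
  ∑ i ∈ Finset.range n, ∑ j ∈ Finset.range n,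
    if i + j = d then f.coeff i * g.coeff j else 0

namespace Polynomial

variable {R : Type*} [CommRing R]

theorem degree_mul_lt_add {p q : R[X]} {a b : ℕ} (hp : p.degree < a) (hq : q.degree < b) :
    (p * q).degree < ↑(a + b) := by
  refine (degree_mul_le p q).trans_lt ?_
  rcases eq_or_ne q.degree ⊥ with hq₀ | hq₀
  · simp [hq₀]
  · exact WithBot.add_lt_add_of_lt_of_le hq₀ hp hq.le

theorem eqOn_degreeLT_of_eq_X_pow {M : Type*} [AddCommMonoid M] [Module R M]
    {φ ψ : R[X] →ₗ[R] M} {N : ℕ} (h : ∀ d < N, φ (X ^ d) = ψ (X ^ d)) :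
    Set.EqOn φ ψ (degreeLT R N) := by
  classical
  rw [degreeLT_eq_span_X_pow]
  refine LinearMap.eqOn_span' ?_
  rw [Finset.coe_image]
  rintro _ ⟨d, hd, rfl⟩
  exact h d (Finset.mem_range.1 hd)

theorem modByMonic_eq_of_dvd_sub_of_degree_lt {p q r : R[X]} (hq : q.Monic) (h : q ∣ p - r)
    (hr : r.degree < q.degree) : p %ₘ q = r := by
  obtain ⟨c, hc⟩ := h
  exact (div_modByMonic_unique c r hq ⟨by rw [← hc]; ring, hr⟩).2

variable (m : ℕ)

theorem monic_X_pow_add_self_sub_X_pow_add_one : ((X : R[X]) ^ (m + m) - X ^ m + 1).Monic := by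
  monicity!

theorem degree_X_pow_add_self_sub_X_pow_add_one [Nontrivial R] (hm : 0 < m) :
    ((X : R[X]) ^ (m + m) - X ^ m + 1).degree = ↑(m + m) :=
  (degree_eq_iff_natDegree_eq_of_pos (by omega)).2 (by compute_degree!)

variable {m}

theorem X_pow_modByMonic_of_lt {d : ℕ} (hd : d < m + m) :
    (X : R[X]) ^ d %ₘ (X ^ (m + m) - X ^ m + 1) = X ^ d := by
  nontriviality R
  refine modByMonic_eq_of_dvd_sub_of_degree_lt (monic_X_pow_add_self_sub_X_pow_add_one m)
    (by rw [sub_self]; exact dvd_zero _) ?_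
  rw [degree_X_pow_add_self_sub_X_pow_add_one m (by omega), degree_X_pow]
  exact_mod_cast hd

theorem X_pow_add_self_add_modByMonic {j : ℕ} (hj : j < m) :
    (X : R[X]) ^ (m + m + j) %ₘ (X ^ (m + m) - X ^ m + 1) = X ^ (m + j) - X ^ j := by
  nontriviality R
  refine modByMonic_eq_of_dvd_sub_of_degree_lt (monic_X_pow_add_self_sub_X_pow_add_one m)
    (Dvd.intro (X ^ j) (by ring)) ?_
  rw [degree_X_pow_add_self_sub_X_pow_add_one m (by omega)]
  refine (degree_sub_le _ _).trans_lt (max_lt ?_ ?_) <;>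
  · rw [degree_X_pow]; exact_mod_cast (by omega)

theorem X_pow_add_self_add_self_add_modByMonic {j : ℕ} (hj : j < m) :
    (X : R[X]) ^ (m + m + m + j) %ₘ (X ^ (m + m) - X ^ m + 1) = -X ^ j := by
  nontriviality R
  refine modByMonic_eq_of_dvd_sub_of_degree_lt (monic_X_pow_add_self_sub_X_pow_add_one m)
    (Dvd.intro (X ^ (m + j) + X ^ j) (by ring)) ?_
  rw [degree_X_pow_add_self_sub_X_pow_add_one m (by omega), degree_neg, degree_X_pow]
  exact_mod_cast (by omega)

theorem coeff_X_pow_modByMonic {k d : ℕ} (hk : k < m) (hd : d < m + m + (m + m)) :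
    ((X : R[X]) ^ d %ₘ (X ^ (m + m) - X ^ m + 1)).coeff k
      = (X ^ d : R[X]).coeff k - (X ^ d : R[X]).coeff (k + (m + m))
        - (X ^ d : R[X]).coeff (k + (m + m) + m) := by
  rcases lt_or_ge d (m + m) with hd₁ | hd₁
  · rw [X_pow_modByMonic_of_lt hd₁]
    simp only [coeff_X_pow]
    split_ifs <;> first | omega | ring
  obtain ⟨j, rfl⟩ := Nat.exists_eq_add_of_le hd₁
  rcases lt_or_ge j m with hj | hj
  · rw [X_pow_add_self_add_modByMonic hj]
    simp only [coeff_sub, coeff_X_pow]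
    split_ifs <;> first | omega | ring
  obtain ⟨i, rfl⟩ := Nat.exists_eq_add_of_le hj
  rw [← add_assoc, X_pow_add_self_add_self_add_modByMonic (by omega : i < m)]
  simp only [coeff_neg, coeff_X_pow]
  split_ifs <;> first | omega | ring

end Polynomial

theorem convCoeff_eq_coeff_mul {R : Type*} [CommRing R] {n : ℕ} {f g : R[X]}
    (hf : f.degree < n) (hg : g.degree < n) (d : ℕ) : convCoeff n f g d = (f * g).coeff d := by
  rw [convCoeff, ← Finset.sum_product', ← Finset.sum_filter, coeff_mul]
  refine Finset.sum_subset (fun x hx => ?_) (fun x hxd hx => ?_)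
  · exact Finset.HasAntidiagonal.mem_antidiagonal.2 (Finset.mem_filter.1 hx).2
  · simp only [Finset.mem_filter, Finset.mem_product, Finset.mem_range, not_and_or, not_lt] at hx
    rcases hx with (hi | hj) | hx
    · rw [coeff_eq_zero_of_degree_lt (hf.trans_le (by exact_mod_cast hi)), zero_mul]
    · rw [coeff_eq_zero_of_degree_lt (hg.trans_le (by exact_mod_cast hj)), mul_zero]
    · exact absurd (Finset.HasAntidiagonal.mem_antidiagonal.1 hxd) hx

theorem coeff_mul_mod_low_general {R : Type*} [CommRing R] (n : ℕ) (hne : Even n)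
    (f g : Polynomial R) (hf : f.degree < n) (hg : g.degree < n)
    (k : ℕ) (hk : k ≤ n / 2 - 2) :
    ((f * g) %ₘ ((X : Polynomial R) ^ n - X ^ (n / 2) + 1)).coeff k
      = convCoeff n f g k - convCoeff n f g (k + n) - convCoeff n f g (k + n + n / 2) := by
  obtain ⟨m, rfl⟩ := hne
  rw [show (m + m) / 2 = m by omega] at hk ⊢
  simp only [convCoeff_eq_coeff_mul hf hg]
  have hφψ := eqOn_degreeLT_of_eq_X_pow
    (φ := (lcoeff R k).comp (modByMonicHom (X ^ (m + m) - X ^ m + 1)))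
    (ψ := lcoeff R k - lcoeff R (k + (m + m)) - lcoeff R (k + (m + m) + m))
    (fun d hd => coeff_X_pow_modByMonic (by omega) hd)
  simpa using hφψ (mem_degreeLT.2 (degree_mul_lt_add hf hg))

/-- For `0 ≤ k ≤ n/2 − 2`, the `k`-th coefficient of the product of `f` and `g` in
`R[x]/(xⁿ − x^{n/2} + 1)` is `h_k = a_k − a_{k+n} − a_{k+3n/2}`. -/
theorem coeff_mul_mod_low {R : Type*} [CommRing R] (n : ℕ) (hn : 2 ≤ n) (hne : Even n)
    (f g : Polynomial R) (hf : f.degree < n) (hg : g.degree < n)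
    (k : ℕ) (hk : k ≤ n / 2 - 2) :
    ((f * g) %ₘ ((X : Polynomial R) ^ n - X ^ (n / 2) + 1)).coeff k
      = convCoeff n f g k - convCoeff n f g (k + n) - convCoeff n f g (k + n + n / 2) :=
  coeff_mul_mod_low_general n hne f g hf hg k hk
end

section
/- (Unified NTT splitting map.) Let R be a commutative ring, α ≥ 1 an integer, and N ≥ 2 an even integer. Let S = R[y]/(y^N − y^{N/2} + 1) and let ȳ ∈ S denote the class of y. Then there is a ring isomorphism R[x]/(x^{αN} − x^{αN/2} + 1) ≅ S[x]/(x^α − ȳ), under which the class of x on the left corresponds to the class of x on the right (so that ȳ corresponds to x^α). -/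
/-!
Put `S = R[y]/(h)`. Substituting `y = q(x)` identifies `R[x]/(h(q(x)))` with
`R[x, y]/(h(y), q(x) - y) = S[x]/(q(x) - ȳ)`: sending `x ↦ x` is well defined because
`h(q(x)) = h(ȳ) = 0` on the right, and sending `ȳ ↦ q(x)`, `x ↦ x` is well defined because
`h(q(x)) = 0` on the left. The two maps agree with the identity on generators, so they are
inverse ring isomorphisms. For `h = y^N - y^{N/2} + 1` and `q = x^α` with `N` even,
`h(x^α) = x^{αN} - x^{αN/2} + 1`.
-/

open Polynomial

/-- The ring `S = R[y]/(y^N − y^{N/2} + 1)`. -/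
abbrev Sring (R : Type*) [CommRing R] (N : ℕ) : Type _ :=
  Polynomial R ⧸ Ideal.span {(X : Polynomial R) ^ N - X ^ (N / 2) + 1}

noncomputable instance (R : Type*) [CommRing R] (N : ℕ) : CommRing (Sring R N) :=
  Ideal.Quotient.commRing _

/-- The class `ȳ ∈ S` of the variable `y`. -/
noncomputable def ybar (R : Type*) [CommRing R] (N : ℕ) : Sring R N :=
  Ideal.Quotient.mk (Ideal.span {(X : Polynomial R) ^ N - X ^ (N / 2) + 1}) X

namespace AdjoinRoot

theorem eval₂_root_sub_C {S : Type*} [CommRing S] (p : S[X]) (a : S) :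
    p.eval₂ (of (p - C a)) (root _) = of _ a := by
  rw [← sub_eq_zero, ← eval₂_C (of (p - C a)) (root _), ← eval₂_sub, eval₂_root]

variable {R : Type*} [CommRing R] (h q : R[X])

theorem eval₂_of_root_eq_mk (p : R[X]) : p.eval₂ (of h) (root h) = mk h p := by
  rw [← aeval_eq, aeval_def, algebraMap_eq]

theorem eval₂_root_map_sub_C :
    q.eval₂ ((of (q.map (of h) - C (root h))).comp (of h)) (root _) = of _ (root h) := by
  rw [← eval₂_map, eval₂_root_sub_C]

noncomputable def ofComp : AdjoinRoot h →+* AdjoinRoot (h.comp q) :=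
  lift (of _) (mk _ q) <| by
    rw [← eval₂_of_root_eq_mk, ← eval₂_comp, eval₂_root]

theorem ofComp_comp_of : (ofComp h q).comp (of h) = of (h.comp q) := lift_comp_of _

theorem ofComp_root : ofComp h q (root h) = mk _ q := lift_root _

noncomputable def compToSplit :
    AdjoinRoot (h.comp q) →+* AdjoinRoot (q.map (of h) - C (root h)) :=
  lift ((of _).comp (of h)) (root _) <| by
    rw [eval₂_comp, eval₂_root_map_sub_C, ← hom_eval₂, eval₂_root, map_zero]

noncomputable def splitToComp :
    AdjoinRoot (q.map (of h) - C (root h)) →+* AdjoinRoot (h.comp q) :=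
  lift (ofComp h q) (root _) <| by
    rw [eval₂_sub, eval₂_C, eval₂_map, ofComp_comp_of, ofComp_root, eval₂_of_root_eq_mk,
      sub_self]

noncomputable def compEquiv :
    AdjoinRoot (h.comp q) ≃+* AdjoinRoot (q.map (of h) - C (root h)) :=
  RingEquiv.ofRingHom (compToSplit h q) (splitToComp h q)
    (by ext <;> simp [compToSplit, splitToComp, ofComp, eval₂_root_map_sub_C])
    (by ext <;> simp [compToSplit, splitToComp, ofComp])

@[simp]
theorem compEquiv_root : compEquiv h q (root _) = root _ := by
  simp [compEquiv, compToSplit]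

end AdjoinRoot

open AdjoinRoot in
theorem unified_ntt_splitting_general {R : Type*} [CommRing R] (α N : ℕ)
    (hNe : Even N) :
    ∃ e : (Polynomial R ⧸
            Ideal.span {(X : Polynomial R) ^ (α * N) - X ^ (α * N / 2) + 1}) ≃+*
          (Polynomial (Sring R N) ⧸
            Ideal.span {(X : Polynomial (Sring R N)) ^ α - C (ybar R N)}),
      e (Ideal.Quotient.mk
            (Ideal.span {(X : Polynomial R) ^ (α * N) - X ^ (α * N / 2) + 1}) X)
        = Ideal.Quotient.mk
            (Ideal.span {(X : Polynomial (Sring R N)) ^ α - C (ybar R N)}) X := by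
  set h : R[X] := X ^ N - X ^ (N / 2) + 1
  have hcomp : h.comp (X ^ α) = X ^ (α * N) - X ^ (α * N / 2) + 1 := by
    rw [Nat.mul_div_assoc α (even_iff_two_dvd.mp hNe)]
    simp [h, pow_mul]
  have hsplit : (X ^ α : R[X]).map (of h) - C (root h) = X ^ α - C (ybar R N) := by
    rw [Polynomial.map_pow, map_X]
    rfl
  have key : ∃ e : AdjoinRoot (h.comp (X ^ α)) ≃+*
      AdjoinRoot ((X ^ α : R[X]).map (of h) - C (root h)), e (root _) = root _ :=
    ⟨_, compEquiv_root h _⟩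
  rw [hcomp, hsplit] at key
  -- `AdjoinRoot f` is by definition `R[X] ⧸ span {f}`, with `root f` the class of `X`.
  exact key

/-- Unified NTT splitting map: with `S = R[y]/(y^N − y^{N/2} + 1)` and `ȳ` the class of `y`,
there is a ring isomorphism `R[x]/(x^{αN} − x^{αN/2} + 1) ≅ S[x]/(x^α − ȳ)` sending the
class of `x` to the class of `x` (so that `ȳ` corresponds to `x^α`). -/
theorem unified_ntt_splitting {R : Type*} [CommRing R] (α N : ℕ)
    (hα : 1 ≤ α) (hN : 2 ≤ N) (hNe : Even N) :
    ∃ e : (Polynomial R ⧸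
            Ideal.span {(X : Polynomial R) ^ (α * N) - X ^ (α * N / 2) + 1}) ≃+*
          (Polynomial (Sring R N) ⧸
            Ideal.span {(X : Polynomial (Sring R N)) ^ α - C (ybar R N)}),
      e (Ideal.Quotient.mk
            (Ideal.span {(X : Polynomial R) ^ (α * N) - X ^ (α * N / 2) + 1}) X)
        = Ideal.Quotient.mk
            (Ideal.span {(X : Polynomial (Sring R N)) ^ α - C (ybar R N)}) X :=
  unified_ntt_splitting_general α N hNe
end
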